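/- Let X₂, X₃ : [0,1] → ℝ be square-integrable with a ≠ 0, X_t = (a, X_{2,t}, X_{3,t})'. Then det(∫₀¹ X_t X_t' dt) = 0 if and only if at least one of the following holds almost everywhere on [0,1]: (i) X_{2,t} = ∫₀¹X_{2,s}ds; (ii) X_{3,t} = ∫₀¹X_{3,s}ds; (iii) there exists c ≠ 0 with X_{2,t} − ∫₀¹X_{2,s}ds = c(X_{3,t} − ∫₀¹X_{3,s}ds). -/

import Mathlib

/-!
Centering `X₂` and `X₃` at their means and expanding along the constant coordinate gives
`det (∫₀¹ X_t X_t' dt) = a² (Var X₂ · Var X₃ - Cov(X₂, X₃)²)`. The bracket is the Gram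
determinant of the centered variables in `L²([0,1])`, so it vanishes exactly in the equality case
of Cauchy–Schwarz: one centered variable is zero, or they are nonzero multiples of each other.
-/

open MeasureTheory ProbabilityTheory
open scoped RealInnerProductSpace

section CauchySchwarz

variable {F : Type*} [NormedAddCommGroup F] [InnerProductSpace ℝ F]

theorem real_inner_self_mul_inner_self_eq_inner_sq_iff (x y : F) :
    ⟪x, x⟫ * ⟪y, y⟫ = ⟪x, y⟫ ^ 2 ↔ x = 0 ∨ y = 0 ∨ ∃ c : ℝ, c ≠ 0 ∧ x = c • y := by
  have h_abs : ⟪x, x⟫ * ⟪y, y⟫ = ⟪x, y⟫ ^ 2 ↔ ‖⟪y, x⟫‖ = ‖y‖ * ‖x‖ := by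
    have h_norms : ⟪x, x⟫ * ⟪y, y⟫ = (‖y‖ * ‖x‖) ^ 2 := by
      rw [real_inner_self_eq_norm_sq, real_inner_self_eq_norm_sq]; ring
    rw [h_norms, ← real_inner_comm x y, Real.norm_eq_abs, ← sq_abs ⟪y, x⟫,
      eq_comm (a := (‖y‖ * ‖x‖) ^ 2), pow_left_inj₀ (abs_nonneg _) (by positivity) two_ne_zero]
  have h_cs : ‖⟪y, x⟫‖ = ‖y‖ * ‖x‖ ↔ y = 0 ∨ ∃ r : ℝ, x = r • y :=
    (norm_inner_eq_norm_tfae ℝ y x).out 0 2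
  rw [h_abs, h_cs]
  constructor
  · rintro (hy | ⟨c, rfl⟩)
    · exact Or.inr (Or.inl hy)
    · rcases eq_or_ne c 0 with rfl | hc
      · exact Or.inl (zero_smul ℝ y)
      · exact Or.inr (Or.inr ⟨c, hc, rfl⟩)
  · rintro (rfl | hy | ⟨c, -, rfl⟩)
    · exact Or.inr ⟨0, (zero_smul ℝ y).symm⟩
    · exact Or.inl hy
    · exact Or.inr ⟨c, rfl⟩

end CauchySchwarz

section Centered

variable {Ω : Type*} {mΩ : MeasurableSpace Ω} {μ : Measure Ω} [IsFiniteMeasure μ]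
  {X Y : Ω → ℝ}

noncomputable def centeredLp (hX : MemLp X 2 μ) : Lp ℝ 2 μ :=
  MemLp.toLp (fun t => X t - μ[X]) (hX.sub (memLp_const _))

theorem coeFn_centeredLp (hX : MemLp X 2 μ) : centeredLp hX =ᵐ[μ] fun t => X t - μ[X] :=
  MemLp.coeFn_toLp _

theorem inner_centeredLp (hX : MemLp X 2 μ) (hY : MemLp Y 2 μ) :
    ⟪centeredLp hX, centeredLp hY⟫ = cov[X, Y; μ] := by
  rw [L2.inner_def, covariance]
  refine integral_congr_ae ?_
  filter_upwards [coeFn_centeredLp hX, coeFn_centeredLp hY] with t hXt hYt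
  simp [hXt, hYt, mul_comm]

theorem centeredLp_eq_zero_iff (hX : MemLp X 2 μ) :
    centeredLp hX = 0 ↔ ∀ᵐ t ∂μ, X t = μ[X] := by
  rw [Lp.eq_zero_iff_ae_eq_zero, (coeFn_centeredLp hX).congr_left]
  simp only [Filter.EventuallyEq, Pi.zero_apply, sub_eq_zero]

theorem centeredLp_eq_smul_iff (hX : MemLp X 2 μ) (hY : MemLp Y 2 μ) (c : ℝ) :
    centeredLp hX = c • centeredLp hY ↔ ∀ᵐ t ∂μ, X t - μ[X] = c * (Y t - μ[Y]) := by
  rw [Lp.ext_iff, (coeFn_centeredLp hX).congr_left,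
    ((Lp.coeFn_smul c _).trans ((coeFn_centeredLp hY).fun_comp (c • ·))).congr_right]
  simp only [Filter.EventuallyEq, Function.comp_apply, smul_eq_mul]

theorem covariance_mul_covariance_eq_covariance_sq_iff (hX : MemLp X 2 μ) (hY : MemLp Y 2 μ) :
    cov[X, X; μ] * cov[Y, Y; μ] = cov[X, Y; μ] ^ 2 ↔
      (∀ᵐ t ∂μ, X t = μ[X]) ∨ (∀ᵐ t ∂μ, Y t = μ[Y]) ∨
        ∃ c : ℝ, c ≠ 0 ∧ ∀ᵐ t ∂μ, X t - μ[X] = c * (Y t - μ[Y]) := by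
  rw [← inner_centeredLp hX hX, ← inner_centeredLp hY hY, ← inner_centeredLp hX hY,
    real_inner_self_mul_inner_self_eq_inner_sq_iff, centeredLp_eq_zero_iff,
    centeredLp_eq_zero_iff]
  simp only [centeredLp_eq_smul_iff]

end Centered

theorem det_gram_const_eq_sq_mul_covariance {Ω : Type*} {mΩ : MeasurableSpace Ω} {μ : Measure Ω}
    [IsProbabilityMeasure μ] (a : ℝ) {X Y : Ω → ℝ} (hX : MemLp X 2 μ) (hY : MemLp Y 2 μ) :
    (Matrix.of fun i j : Fin 3 => ∫ t, ![a, X t, Y t] i * ![a, X t, Y t] j ∂μ).det =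
      a ^ 2 * (cov[X, X; μ] * cov[Y, Y; μ] - cov[X, Y; μ] ^ 2) := by
  have hYX : ∫ t, Y t * X t ∂μ = ∫ t, X t * Y t ∂μ := by simp_rw [mul_comm]
  rw [Matrix.det_fin_three, covariance_eq_sub hX hX, covariance_eq_sub hY hY,
    covariance_eq_sub hX hY]
  simp only [Matrix.of_apply, Matrix.cons_val_zero, Matrix.cons_val_one, Matrix.cons_val_two,
    Matrix.head_cons, Matrix.tail_cons, Pi.mul_apply, integral_const_mul, integral_mul_const,
    integral_const, probReal_univ, one_smul, hYX]
  ring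

/-- For `X_t = (a, X₂(t), X₃(t))'` with `a ≠ 0` and `X₂, X₃` square-integrable on `[0,1]`,
`det(∫₀¹ X_t X_t' dt) = 0` iff, almost everywhere on `[0,1]`: (i) `X₂` equals its mean, or
(ii) `X₃` equals its mean, or (iii) there is `c ≠ 0` with
`X₂ - ∫X₂ = c (X₃ - ∫X₃)` a.e. -/
theorem stmt6 (a : ℝ) (ha : a ≠ 0) (X₂ X₃ : ℝ → ℝ)
    (h2 : MemLp X₂ 2 (volume.restrict (Set.Ioc (0 : ℝ) 1)))
    (h3 : MemLp X₃ 2 (volume.restrict (Set.Ioc (0 : ℝ) 1))) :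
    (Matrix.of fun i j : Fin 3 =>
        ∫ t in (0 : ℝ)..1, ![a, X₂ t, X₃ t] i * ![a, X₂ t, X₃ t] j).det = 0 ↔
      ((∀ᵐ t ∂volume.restrict (Set.Ioc (0 : ℝ) 1), X₂ t = ∫ s in (0 : ℝ)..1, X₂ s) ∨
       (∀ᵐ t ∂volume.restrict (Set.Ioc (0 : ℝ) 1), X₃ t = ∫ s in (0 : ℝ)..1, X₃ s) ∨
       (∃ c : ℝ, c ≠ 0 ∧ ∀ᵐ t ∂volume.restrict (Set.Ioc (0 : ℝ) 1),
          X₂ t - ∫ s in (0 : ℝ)..1, X₂ s = c * (X₃ t - ∫ s in (0 : ℝ)..1, X₃ s))) := by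
  have : IsProbabilityMeasure (volume.restrict (Set.Ioc (0 : ℝ) 1)) := ⟨by simp⟩
  simp only [intervalIntegral.integral_of_le zero_le_one]
  rw [det_gram_const_eq_sq_mul_covariance a h2 h3, mul_eq_zero, or_iff_right (pow_ne_zero 2 ha),
    sub_eq_zero, covariance_mul_covariance_eq_covariance_sq_iff h2 h3]
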